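/- arXiv:1001.5243 — 2 statements merged into one kernel-verified Lean document; each statement's English description precedes it below -/
import Mathlib

section
/- Let α, β ∈ V satisfy ⟨α,α⟩ < 0, ⟨β,β⟩ < 0 and ⟨α,β⟩ < 0, and assume there exists γ ∈ V with ⟨γ,γ⟩ > 0, ⟨γ,L⟩ > 0, ⟨α,γ⟩ ≤ 0 and ⟨β,γ⟩ ≥ 0. Then the following are equivalent: (i) there exist q ∈ Q̄ and t ≥ 0 with β = q + t·α; (ii) the equation ⟨tβ − α, tβ − α⟩ = 0 has a real solution t; (iii) every δ ∈ V with ⟨δ,δ⟩ ≥ 0, ⟨δ,L⟩ ≥ 0 and ⟨δ,β⟩ = 0 satisfies ⟨δ,α⟩ ≤ 0. -/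
/-!
Everything is governed by the sign of `gramDisc α β = ⟨α,β⟩² − ⟨α,α⟩⟨β,β⟩`, minus the Gram
determinant of `α, β`. The quadratics `t ↦ ⟨tβ − α, tβ − α⟩` of (ii) and `t ↦ ⟨β − tα, β − tα⟩`
of (i) both have discriminant `4 · gramDisc α β`. When it is nonnegative, a nonnegative root `t`
of the second makes `q = β − tα` isotropic, and `⟨q, γ⟩ ≥ 0` puts `q` in the future cone `Q̄`.
By the reverse Cauchy–Schwarz inequality `⟨δ, q⟩ ≥ 0` on `Q̄`, so (i) gives (iii). If instead
`gramDisc α β < 0`, the plane spanned by `α, β` is negative definite, so its orthogonal complement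
contains a timelike vector; pushing it slightly along `⟨β,β⟩α − ⟨α,β⟩β`, which is orthogonal to
`β` and pairs positively with `α`, gives a `δ ∈ Q̄` refuting (iii).
-/

open scoped BigOperators

/-- The Minkowski intersection form of signature (1,r) on `ℝ^{r+1}`:
`⟨u,v⟩ = u₀v₀ − u₁v₁ − ⋯ − u_r v_r`. -/
noncomputable def mform (r : ℕ) (u v : Fin (r + 1) → ℝ) : ℝ :=
  u 0 * v 0 - ∑ i : Fin r, u i.succ * v i.succ

/-- The class `L = (1,0,…,0)` of a line. -/
def lclass (r : ℕ) : Fin (r + 1) → ℝ := fun i => if i = 0 then 1 else 0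

/-- The canonical class `K = (−3,1,…,1)`. -/
def kclass (r : ℕ) : Fin (r + 1) → ℝ := fun i => if i = 0 then -3 else 1

/-- `Q = {α : ⟨α,α⟩ ≥ 0, ⟨α,L⟩ > 0}`. -/
def Qset (r : ℕ) : Set (Fin (r + 1) → ℝ) :=
  {α | 0 ≤ mform r α α ∧ 0 < mform r α (lclass r)}

/-- `Q̄ = {α : ⟨α,α⟩ ≥ 0, ⟨α,L⟩ ≥ 0}`. -/
def Qbar (r : ℕ) : Set (Fin (r + 1) → ℝ) :=
  {α | 0 ≤ mform r α α ∧ 0 ≤ mform r α (lclass r)}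

open Filter Topology

lemma exists_quadratic_eq_zero_iff_discrim_nonneg {a b c : ℝ} (ha : a ≠ 0) :
    (∃ x, a * (x * x) + b * x + c = 0) ↔ 0 ≤ discrim a b c := by
  constructor
  · rintro ⟨x, hx⟩
    rw [discrim_eq_sq_of_quadratic_eq_zero hx]
    positivity
  · intro h
    exact exists_quadratic_eq_zero ha ⟨√(discrim a b c), (Real.mul_self_sqrt h).symm⟩

lemma discrim_nonneg_of_neg_of_quadratic_nonneg {a b c x : ℝ} (ha : a < 0)
    (h : 0 ≤ a * (x * x) + b * x + c) : 0 ≤ discrim a b c := by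
  have key : discrim a b c = (2 * a * x + b) ^ 2 - 4 * a * (a * (x * x) + b * x + c) := by
    unfold discrim; ring
  rw [key]
  nlinarith [sq_nonneg (2 * a * x + b)]

lemma exists_nonneg_quadratic_eq_zero {a b c : ℝ} (ha : a < 0) (hb : 0 ≤ b) (hc : c ≤ 0)
    (hd : 0 ≤ discrim a b c) : ∃ x, 0 ≤ x ∧ a * (x * x) + b * x + c = 0 := by
  set s := √(discrim a b c)
  have hs : discrim a b c = s * s := (Real.mul_self_sqrt hd).symm
  have hsb : s ≤ b := Real.sqrt_le_iff.2 ⟨hb, by unfold discrim; nlinarith⟩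
  refine ⟨(-b + s) / (2 * a), div_nonneg_of_nonpos (by linarith) (by linarith), ?_⟩
  exact (quadratic_eq_zero_iff ha.ne hs _).2 (Or.inl rfl)

section Minkowski

variable {r : ℕ}

lemma mform_comm (u v : Fin (r + 1) → ℝ) : mform r u v = mform r v u := by
  simp only [mform, mul_comm]

lemma mform_add_left (u v w : Fin (r + 1) → ℝ) :
    mform r (u + v) w = mform r u w + mform r v w := by
  simp only [mform, Pi.add_apply, add_mul, Finset.sum_add_distrib]
  ring

lemma mform_smul_left (c : ℝ) (u w : Fin (r + 1) → ℝ) :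
    mform r (c • u) w = c * mform r u w := by
  simp only [mform, Pi.smul_apply, smul_eq_mul, mul_sub, Finset.mul_sum, mul_assoc]

lemma mform_neg_left (u w : Fin (r + 1) → ℝ) : mform r (-u) w = -mform r u w := by
  rw [← neg_one_smul ℝ u, mform_smul_left, neg_one_mul]

lemma mform_sub_left (u v w : Fin (r + 1) → ℝ) :
    mform r (u - v) w = mform r u w - mform r v w := by
  rw [sub_eq_add_neg, mform_add_left, mform_neg_left, sub_eq_add_neg]

lemma mform_add_right (u v w : Fin (r + 1) → ℝ) :
    mform r u (v + w) = mform r u v + mform r u w := by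
  rw [mform_comm, mform_add_left, mform_comm v, mform_comm w]

lemma mform_smul_right (c : ℝ) (u w : Fin (r + 1) → ℝ) :
    mform r u (c • w) = c * mform r u w := by
  rw [mform_comm, mform_smul_left, mform_comm w]

lemma mform_neg_right (u w : Fin (r + 1) → ℝ) : mform r u (-w) = -mform r u w := by
  rw [mform_comm, mform_neg_left, mform_comm w]

lemma mform_sub_right (u v w : Fin (r + 1) → ℝ) :
    mform r u (v - w) = mform r u v - mform r u w := by
  rw [mform_comm, mform_sub_left, mform_comm v, mform_comm w]

lemma mform_lclass (u : Fin (r + 1) → ℝ) : mform r u (lclass r) = u 0 := by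
  simp [mform, lclass, Fin.succ_ne_zero]

lemma mform_smul_sub_self (u v : Fin (r + 1) → ℝ) (t : ℝ) :
    mform r (t • u - v) (t • u - v) =
      mform r u u * (t * t) + (-2 * mform r u v) * t + mform r v v := by
  simp only [mform_sub_left, mform_sub_right, mform_smul_left, mform_smul_right, mform_comm v u]
  ring

lemma mform_sub_smul_self (u v : Fin (r + 1) → ℝ) (t : ℝ) :
    mform r (u - t • v) (u - t • v) =
      mform r v v * (t * t) + (-2 * mform r v u) * t + mform r u u := by
  simp only [mform_sub_left, mform_sub_right, mform_smul_left, mform_smul_right, mform_comm u v]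
  ring

lemma sum_sq_succ_le {u : Fin (r + 1) → ℝ} (h : 0 ≤ mform r u u) :
    ∑ i : Fin r, u i.succ ^ 2 ≤ u 0 ^ 2 := by
  simp only [mform, ← sq] at h
  linarith

lemma sum_sq_succ_lt {u : Fin (r + 1) → ℝ} (h : 0 < mform r u u) :
    ∑ i : Fin r, u i.succ ^ 2 < u 0 ^ 2 := by
  simp only [mform, ← sq] at h
  linarith

lemma apply_zero_ne_zero_of_mform_self_pos {u : Fin (r + 1) → ℝ} (h : 0 < mform r u u) :
    u 0 ≠ 0 := by
  intro h0
  have := sum_sq_succ_lt h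
  rw [h0, zero_pow two_ne_zero] at this
  exact this.not_ge (by positivity)

/-- The interior `Q°` of the positive cone. -/
def Qint (r : ℕ) : Set (Fin (r + 1) → ℝ) :=
  {α | 0 < mform r α α ∧ 0 < mform r α (lclass r)}

lemma Qint_subset_Qbar : Qint r ⊆ Qbar r := fun _ h => ⟨h.1.le, h.2.le⟩

lemma lclass_mem_Qint : lclass r ∈ Qint r := by
  simp [Qint, mform, lclass, Fin.succ_ne_zero]

lemma isOpen_Qint : IsOpen (Qint r) := by
  simp only [Qint, mform_lclass]
  have hcont : Continuous fun u : Fin (r + 1) → ℝ => mform r u u := by unfold mform; fun_prop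
  exact (isOpen_lt continuous_const hcont).inter
    (isOpen_lt continuous_const (continuous_apply 0))

lemma exists_pos_add_smul_mem_Qint {δ : Fin (r + 1) → ℝ} (hδ : δ ∈ Qint r)
    (w : Fin (r + 1) → ℝ) : ∃ ε : ℝ, 0 < ε ∧ δ + ε • w ∈ Qint r := by
  have hcont : Continuous fun ε : ℝ => δ + ε • w := by fun_prop
  have hnear : ∀ᶠ ε in 𝓝 (0 : ℝ), δ + ε • w ∈ Qint r :=
    hcont.continuousAt.preimage_mem_nhds (by simpa using isOpen_Qint.mem_nhds hδ)
  have hpos : ∀ᶠ ε in 𝓝[>] (0 : ℝ), 0 < ε := self_mem_nhdsWithin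
  exact (hpos.and (hnear.filter_mono nhdsWithin_le_nhds)).exists

lemma mform_nonneg_of_mem_Qbar {u v : Fin (r + 1) → ℝ} (hu : u ∈ Qbar r) (hv : v ∈ Qbar r) :
    0 ≤ mform r u v := by
  obtain ⟨huu, hu0⟩ := hu
  obtain ⟨hvv, hv0⟩ := hv
  rw [mform_lclass] at hu0 hv0
  have hcs : (∑ i : Fin r, u i.succ * v i.succ) ^ 2 ≤ (u 0 * v 0) ^ 2 :=
    calc _ ≤ (∑ i : Fin r, u i.succ ^ 2) * ∑ i : Fin r, v i.succ ^ 2 :=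
          Finset.sum_mul_sq_le_sq_mul_sq _ _ _
      _ ≤ u 0 ^ 2 * v 0 ^ 2 :=
          mul_le_mul (sum_sq_succ_le huu) (sum_sq_succ_le hvv) (by positivity) (by positivity)
      _ = _ := by ring
  have := (abs_le_of_sq_le_sq' hcs (by positivity)).2
  rw [mform]
  linarith

lemma mform_pos_of_mem_Qset_of_mem_Qint {u v : Fin (r + 1) → ℝ} (hu : u ∈ Qset r)
    (hv : v ∈ Qint r) : 0 < mform r u v := by
  obtain ⟨huu, hu0⟩ := hu
  obtain ⟨hvv, hv0⟩ := hv
  rw [mform_lclass] at hu0 hv0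
  have hcs : (∑ i : Fin r, u i.succ * v i.succ) ^ 2 < (u 0 * v 0) ^ 2 :=
    calc _ ≤ (∑ i : Fin r, u i.succ ^ 2) * ∑ i : Fin r, v i.succ ^ 2 :=
          Finset.sum_mul_sq_le_sq_mul_sq _ _ _
      _ < u 0 ^ 2 * v 0 ^ 2 :=
          mul_lt_mul' (sum_sq_succ_le huu) (sum_sq_succ_lt hvv) (by positivity) (by positivity)
      _ = _ := by ring
  have := (abs_lt_of_sq_lt_sq' hcs (by positivity)).2
  rw [mform]
  linarith

lemma mem_Qbar_of_mform_nonneg {q γ : Fin (r + 1) → ℝ} (hq : 0 ≤ mform r q q)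
    (hγ : γ ∈ Qint r) (hqγ : 0 ≤ mform r q γ) : q ∈ Qbar r := by
  refine ⟨hq, not_lt.1 fun hqL => ?_⟩
  have hneg : -q ∈ Qset r :=
    ⟨by rwa [mform_neg_left, mform_neg_right, neg_neg], by rw [mform_neg_left]; linarith⟩
  have := mform_pos_of_mem_Qset_of_mem_Qint hneg hγ
  rw [mform_neg_left] at this
  linarith

noncomputable def gramDisc (r : ℕ) (α β : Fin (r + 1) → ℝ) : ℝ :=
  mform r α β ^ 2 - mform r α α * mform r β β

lemma gramDisc_comm (α β : Fin (r + 1) → ℝ) : gramDisc r α β = gramDisc r β α := by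
  rw [gramDisc, gramDisc, mform_comm α β, mul_comm]

lemma discrim_mform (u v : Fin (r + 1) → ℝ) :
    discrim (mform r u u) (-2 * mform r u v) (mform r v v) = 4 * gramDisc r u v := by
  rw [discrim, gramDisc]
  ring

lemma gramDisc_nonneg_of_eq_add_smul {α β q : Fin (r + 1) → ℝ} {t : ℝ}
    (hα : mform r α α < 0) (hq : 0 ≤ mform r q q) (hβq : β = q + t • α) :
    0 ≤ gramDisc r α β := by
  rw [eq_sub_of_add_eq hβq.symm, mform_sub_smul_self] at hq
  have := discrim_nonneg_of_neg_of_quadratic_nonneg hα hq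
  rw [discrim_mform] at this
  exact nonneg_of_mul_nonneg_right this four_pos

lemma exists_eq_add_smul_of_gramDisc_nonneg {α β γ : Fin (r + 1) → ℝ}
    (hαα : mform r α α < 0) (hββ : mform r β β < 0) (hαβ : mform r α β < 0)
    (hγ : γ ∈ Qint r) (hαγ : mform r α γ ≤ 0) (hβγ : 0 ≤ mform r β γ)
    (hD : 0 ≤ gramDisc r α β) : ∃ q ∈ Qbar r, ∃ t : ℝ, 0 ≤ t ∧ β = q + t • α := by
  obtain ⟨t, ht, hroot⟩ :=
    exists_nonneg_quadratic_eq_zero (b := -2 * mform r α β) hαα (by linarith) hββ.le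
    (by rw [discrim_mform]; positivity)
  have hqq : mform r (β - t • α) (β - t • α) = 0 := by
    rw [mform_sub_smul_self, hroot]
  have hqγ : 0 ≤ mform r (β - t • α) γ := by
    rw [mform_sub_left, mform_smul_left]
    linarith [mul_nonpos_of_nonneg_of_nonpos ht hαγ]
  exact ⟨β - t • α, mem_Qbar_of_mform_nonneg hqq.ge hγ hqγ, t, ht, by abel⟩

lemma mform_nonpos_of_eq_add_smul {α β q δ : Fin (r + 1) → ℝ} {t : ℝ}
    (hββ : mform r β β < 0) (hq : q ∈ Qbar r) (ht : 0 ≤ t) (hβq : β = q + t • α)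
    (hδ : δ ∈ Qbar r) (hδβ : mform r δ β = 0) : mform r δ α ≤ 0 := by
  have htpos : 0 < t := by
    refine ht.lt_of_ne fun h0 => ?_
    rw [← h0, zero_smul, add_zero] at hβq
    exact hββ.not_ge (hβq ▸ hq.1)
  have hδq := mform_nonneg_of_mem_Qbar hδ hq
  rw [hβq, mform_add_right, mform_smul_right] at hδβ
  exact nonpos_of_mul_nonpos_right (by linarith) htpos

lemma mform_self_nonpos_of_gramDisc_neg {α β : Fin (r + 1) → ℝ} (hα : mform r α α < 0)
    (hD : gramDisc r α β < 0) (a b : ℝ) :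
    mform r (a • α + b • β) (a • α + b • β) ≤ 0 := by
  have key : mform r α α * mform r (a • α + b • β) (a • α + b • β) =
      (a * mform r α α + b * mform r α β) ^ 2 + b ^ 2 * -gramDisc r α β := by
    simp only [mform_add_left, mform_add_right, mform_smul_left, mform_smul_right,
      mform_comm β α, gramDisc]
    ring
  refine nonpos_of_mul_nonneg_right ?_ hα
  rw [key]
  have : 0 ≤ -gramDisc r α β := by linarith
  positivity

lemma exists_sub_orthogonal {α β : Fin (r + 1) → ℝ} (hD : gramDisc r α β ≠ 0)
    (γ : Fin (r + 1) → ℝ) : ∃ a b : ℝ,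
      mform r (γ - (a • α + b • β)) α = 0 ∧ mform r (γ - (a • α + b • β)) β = 0 := by
  refine ⟨(mform r γ β * mform r α β - mform r γ α * mform r β β) / gramDisc r α β,
    (mform r γ α * mform r α β - mform r α α * mform r γ β) / gramDisc r α β, ?_, ?_⟩ <;>
  · simp only [mform_sub_left, mform_add_left, mform_smul_left, mform_comm β α]
    field_simp
    unfold gramDisc
    ring

lemma exists_mem_Qint_orthogonal_of_gramDisc_neg {α β γ : Fin (r + 1) → ℝ}
    (hα : mform r α α < 0) (hD : gramDisc r α β < 0) (hγ : 0 < mform r γ γ) :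
    ∃ δ ∈ Qint r, mform r δ α = 0 ∧ mform r δ β = 0 := by
  obtain ⟨a, b, hδα, hδβ⟩ := exists_sub_orthogonal hD.ne γ
  set p := a • α + b • β
  have hpp : mform r p p ≤ 0 := mform_self_nonpos_of_gramDisc_neg hα hD a b
  set δ := γ - p
  have hδp : mform r δ p = 0 := by
    rw [mform_add_right, mform_smul_right, mform_smul_right, hδα, hδβ, mul_zero, mul_zero,
      add_zero]
  have hγδ : γ = δ + p := (sub_add_cancel γ p).symm
  clear_value δ p
  have hδδ : 0 < mform r δ δ := by
    rw [hγδ, mform_add_left, mform_add_right, mform_add_right, mform_comm p δ, hδp] at hγ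
    linarith
  rcases (apply_zero_ne_zero_of_mform_self_pos hδδ).lt_or_gt with hneg | hpos
  · refine ⟨-δ, ⟨?_, ?_⟩, ?_, ?_⟩
    · rwa [mform_neg_left, mform_neg_right, neg_neg]
    · rw [mform_lclass, Pi.neg_apply]
      linarith
    · rw [mform_neg_left, hδα, neg_zero]
    · rw [mform_neg_left, hδβ, neg_zero]
  · exact ⟨δ, ⟨hδδ, by rwa [mform_lclass]⟩, hδα, hδβ⟩

lemma exists_mem_Qbar_mform_pos_of_gramDisc_neg {α β : Fin (r + 1) → ℝ}
    (hα : mform r α α < 0) (hD : gramDisc r α β < 0) :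
    ∃ δ ∈ Qbar r, mform r δ β = 0 ∧ 0 < mform r δ α := by
  obtain ⟨δ, hδ, hδα, hδβ⟩ :=
    exists_mem_Qint_orthogonal_of_gramDisc_neg hα hD lclass_mem_Qint.1
  set w := mform r β β • α - mform r α β • β
  obtain ⟨ε, hε, hmem⟩ := exists_pos_add_smul_mem_Qint hδ w
  refine ⟨δ + ε • w, Qint_subset_Qbar hmem, ?_, ?_⟩
  · simp only [w, mform_add_left, mform_smul_left, mform_sub_left, hδβ]
    ring
  · have : mform r (δ + ε • w) α = ε * -gramDisc r α β := by
      simp only [w, mform_add_left, mform_smul_left, mform_sub_left, hδα, mform_comm β α,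
        gramDisc]
      ring
    rw [this]
    exact mul_pos hε (by linarith)

end Minkowski

theorem stmt0_general (r : ℕ) (α β γ : Fin (r + 1) → ℝ)
    (hαα : mform r α α < 0) (hββ : mform r β β < 0) (hαβ : mform r α β < 0)
    (hγγ : 0 < mform r γ γ) (hγL : 0 < mform r γ (lclass r))
    (hαγ : mform r α γ ≤ 0) (hβγ : 0 ≤ mform r β γ) :
    ((∃ q ∈ Qbar r, ∃ t : ℝ, 0 ≤ t ∧ β = q + t • α) ↔
      (∃ t : ℝ, mform r (t • β - α) (t • β - α) = 0)) ∧
    ((∃ t : ℝ, mform r (t • β - α) (t • β - α) = 0) ↔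
      (∀ δ : Fin (r + 1) → ℝ, 0 ≤ mform r δ δ → 0 ≤ mform r δ (lclass r) →
        mform r δ β = 0 → mform r δ α ≤ 0)) := by
  have hi : (∃ q ∈ Qbar r, ∃ t : ℝ, 0 ≤ t ∧ β = q + t • α) ↔ 0 ≤ gramDisc r α β :=
    ⟨fun ⟨_, hq, _, _, hβq⟩ => gramDisc_nonneg_of_eq_add_smul hαα hq.1 hβq,
      exists_eq_add_smul_of_gramDisc_nonneg hαα hββ hαβ ⟨hγγ, hγL⟩ hαγ hβγ⟩
  have hii : (∃ t : ℝ, mform r (t • β - α) (t • β - α) = 0) ↔ 0 ≤ gramDisc r α β := by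
    simp only [mform_smul_sub_self]
    rw [exists_quadratic_eq_zero_iff_discrim_nonneg hββ.ne, discrim_mform, gramDisc_comm,
      mul_nonneg_iff_of_pos_left four_pos]
  refine ⟨hi.trans hii.symm, hii.trans ⟨fun hD δ hδδ hδL hδβ => ?_, fun h => ?_⟩⟩
  · obtain ⟨q, hq, t, ht, hβq⟩ := hi.2 hD
    exact mform_nonpos_of_eq_add_smul hββ hq ht hβq ⟨hδδ, hδL⟩ hδβ
  · by_contra! hD
    obtain ⟨δ, hδ, hδβ, hδα⟩ := exists_mem_Qbar_mform_pos_of_gramDisc_neg hαα hD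
    exact (h δ hδ.1 hδ.2 hδβ).not_gt hδα

theorem stmt0 (r : ℕ) (hr : 1 ≤ r) (α β γ : Fin (r + 1) → ℝ)
    (hαα : mform r α α < 0) (hββ : mform r β β < 0) (hαβ : mform r α β < 0)
    (hγγ : 0 < mform r γ γ) (hγL : 0 < mform r γ (lclass r))
    (hαγ : mform r α γ ≤ 0) (hβγ : 0 ≤ mform r β γ) :
    ((∃ q ∈ Qbar r, ∃ t : ℝ, 0 ≤ t ∧ β = q + t • α) ↔
      (∃ t : ℝ, mform r (t • β - α) (t • β - α) = 0)) ∧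
    ((∃ t : ℝ, mform r (t • β - α) (t • β - α) = 0) ↔
      (∀ δ : Fin (r + 1) → ℝ, 0 ≤ mform r δ δ → 0 ≤ mform r δ (lclass r) →
        mform r δ β = 0 → mform r δ α ≤ 0)) :=
  stmt0_general r α β γ hαα hββ hαβ hγγ hγL hαγ hβγ
end

section
/- Let α, β ∈ V be linearly independent vectors with ⟨α,α⟩ < 0 and ⟨β,β⟩ < 0. Then the equation ⟨tβ − α, tβ − α⟩ = 0 has no real solution t if and only if there exists δ ∈ V with ⟨δ,δ⟩ > 0, ⟨δ,L⟩ > 0, ⟨δ,α⟩ = 0 and ⟨δ,β⟩ = 0. -/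
/-
Along the line `t ↦ tβ − α` the form is a quadratic in `t` with negative leading coefficient
`⟨β,β⟩`, so it has no real zero exactly when the Gram matrix of α, β is negative definite.
If it is, Gram–Schmidt against α and then against the component of β orthogonal to α carries
`L` to a vector `δ ⊥ α, β`; each step can only increase the square because it removes a
component along a vector of negative square, so `⟨δ,δ⟩ ≥ ⟨L,L⟩ = 1`, and `⟨δ,L⟩ = ⟨δ,δ⟩`.
Conversely, in signature `(1,r)` every nonzero vector orthogonal to a vector of positive square
has negative square (Cauchy–Schwarz on the last `r` coordinates), so `tβ − α ≠ 0` cannot be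
isotropic once such a `δ` exists.
-/

open scoped BigOperators

namespace LinearMap.BilinForm

variable {V : Type*} [AddCommGroup V] [Module ℝ V] {B : LinearMap.BilinForm ℝ V}

lemma apply_smul_sub_smul_sub (hB : B.IsSymm) (t : ℝ) (α β : V) :
    B (t • β - α) (t • β - α) = B β β * (t * t) + (-2 * B α β) * t + B α α := by
  simp only [map_sub, map_smul, LinearMap.sub_apply, LinearMap.smul_apply, smul_eq_mul,
    hB.eq β α]
  ring

lemma sq_apply_lt_mul_of_forall_ne_zero (hB : B.IsSymm) {α β : V} (hβ : B β β ≠ 0)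
    (h : ∀ t : ℝ, B (t • β - α) (t • β - α) ≠ 0) : B α β ^ 2 < B α α * B β β := by
  by_contra! hdisc
  have hD : 0 ≤ discrim (B β β) (-2 * B α β) (B α α) := by rw [discrim]; nlinarith
  obtain ⟨t, ht⟩ := exists_quadratic_eq_zero hβ ⟨_, (Real.mul_self_sqrt hD).symm⟩
  exact h t (by rw [apply_smul_sub_smul_sub hB, ht])

/-- The component of `v` orthogonal to `w`; just `v` when `B w w = 0`. -/
noncomputable def orthProj (B : LinearMap.BilinForm ℝ V) (w v : V) : V :=
  v - (B v w / B w w) • w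

lemma orthProj_apply_left (w v : V) (hw : B w w ≠ 0) : B (B.orthProj w v) w = 0 := by
  simp only [orthProj, map_sub, map_smul, LinearMap.sub_apply, LinearMap.smul_apply,
    smul_eq_mul]
  field_simp
  ring

lemma apply_orthProj_right {u w : V} (v : V) (huw : B u w = 0) :
    B u (B.orthProj w v) = B u v := by
  simp [orthProj, huw]

lemma orthProj_apply_self (hB : B.IsSymm) {w : V} (v : V) (hw : B w w ≠ 0) :
    B (B.orthProj w v) (B.orthProj w v) = B v v - B v w ^ 2 / B w w := by
  rw [apply_orthProj_right v (orthProj_apply_left w v hw)]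
  simp only [orthProj, map_sub, map_smul, LinearMap.sub_apply, LinearMap.smul_apply,
    smul_eq_mul, hB.eq w v]
  ring

lemma apply_self_le_orthProj (hB : B.IsSymm) {w : V} (v : V) (hw : B w w < 0) :
    B v v ≤ B (B.orthProj w v) (B.orthProj w v) := by
  rw [orthProj_apply_self hB v hw.ne]
  linarith [div_nonpos_of_nonneg_of_nonpos (sq_nonneg (B v w)) hw.le]

lemma exists_orthogonal_apply_self_ge (hB : B.IsSymm) {α β : V} (hα : B α α < 0)
    (hgram : B α β ^ 2 < B α α * B β β) (ℓ : V) :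
    ∃ δ, B ℓ ℓ ≤ B δ δ ∧ B δ ℓ = B δ δ ∧ B δ α = 0 ∧ B δ β = 0 := by
  set β₁ := B.orthProj α β
  set ℓ₁ := B.orthProj α ℓ
  -- `⟨β₁,β₁⟩ = (⟨α,α⟩⟨β,β⟩ − ⟨α,β⟩²) / ⟨α,α⟩`
  have hβ₁ : B β₁ β₁ < 0 := by
    rw [orthProj_apply_self hB β hα.ne, sub_neg, lt_div_iff_of_neg hα, hB.eq β α]
    linarith
  have hβ₁α : B α β₁ = 0 := by rw [hB.eq]; exact orthProj_apply_left α β hα.ne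
  have hℓ₁α : B α ℓ₁ = 0 := by rw [hB.eq]; exact orthProj_apply_left α ℓ hα.ne
  set δ := B.orthProj β₁ ℓ₁
  have hδβ₁ : B δ β₁ = 0 := orthProj_apply_left β₁ ℓ₁ hβ₁.ne
  have hδα : B δ α = 0 := by rw [hB.eq, apply_orthProj_right ℓ₁ hβ₁α, hℓ₁α]
  refine ⟨δ, ?_, ?_, hδα, ?_⟩
  · exact (apply_self_le_orthProj hB ℓ hα).trans (apply_self_le_orthProj hB ℓ₁ hβ₁)
  · rw [apply_orthProj_right ℓ₁ hδβ₁, apply_orthProj_right ℓ hδα]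
  · rw [← apply_orthProj_right β hδα, hδβ₁]

end LinearMap.BilinForm

section Minkowski

variable {r : ℕ}

noncomputable def mformBilin (r : ℕ) : LinearMap.BilinForm ℝ (Fin (r + 1) → ℝ) :=
  LinearMap.mk₂ ℝ (mform r)
    (fun u u' v => by simp only [mform, Pi.add_apply, add_mul, Finset.sum_add_distrib]; ring)
    (fun c u v => by
      simp only [mform, Pi.smul_apply, smul_eq_mul, mul_assoc, ← Finset.mul_sum]; ring)
    (fun u v v' => by simp only [mform, Pi.add_apply, mul_add, Finset.sum_add_distrib]; ring)
    (fun c u v => by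
      simp only [mform, Pi.smul_apply, smul_eq_mul, mul_left_comm _ c, ← Finset.mul_sum]; ring)

lemma mformBilin_apply (u v : Fin (r + 1) → ℝ) : mformBilin r u v = mform r u v := rfl

lemma mformBilin_isSymm : (mformBilin r).IsSymm :=
  ⟨fun u v => by simp only [mformBilin_apply, mform, mul_comm (u _) (v _)]⟩

lemma mform_lclass_self : mform r (lclass r) (lclass r) = 1 := by
  simp [mform, lclass, Fin.succ_ne_zero]

lemma mform_self_neg_of_orthogonal {δ γ : Fin (r + 1) → ℝ} (hδ : 0 < mform r δ δ)
    (horth : mform r δ γ = 0) (hγ : γ ≠ 0) : mform r γ γ < 0 := by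
  unfold mform at *
  set Sδ := ∑ i : Fin r, δ i.succ * δ i.succ
  set Sγ := ∑ i : Fin r, γ i.succ * γ i.succ
  have hcs : (∑ i : Fin r, δ i.succ * γ i.succ) ^ 2 ≤ Sδ * Sγ := by
    simpa only [sq] using Finset.sum_mul_sq_le_sq_mul_sq Finset.univ (fun i : Fin r => δ i.succ)
      (fun i => γ i.succ)
  have hSδ : 0 ≤ Sδ := Finset.sum_nonneg fun i _ => mul_self_nonneg _
  have hSγ : 0 ≤ Sγ := Finset.sum_nonneg fun i _ => mul_self_nonneg _
  by_contra! hγγ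
  have hγ0 : γ 0 = 0 := by
    have hδγ : (δ 0 * γ 0) ^ 2 ≤ Sδ * (γ 0 * γ 0) :=
      (sub_eq_zero.mp horth ▸ hcs).trans (mul_le_mul_of_nonneg_left (by linarith) hSδ)
    have h : γ 0 * γ 0 * (δ 0 * δ 0 - Sδ) ≤ 0 := by nlinarith
    exact mul_self_eq_zero.mp (le_antisymm (nonpos_of_mul_nonpos_left h hδ) (mul_self_nonneg _))
  have hSγ0 : Sγ = 0 := by rw [hγ0] at hγγ; linarith
  have hγsucc : ∀ i : Fin r, γ i.succ = 0 := fun i =>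
    mul_self_eq_zero.mp <| (Finset.sum_eq_zero_iff_of_nonneg fun j _ => mul_self_nonneg _).mp
      hSγ0 i (Finset.mem_univ i)
  exact hγ (funext fun i => Fin.cases hγ0 hγsucc i)

end Minkowski

theorem stmt3_general (r : ℕ) (α β : Fin (r + 1) → ℝ)
    (hind : LinearIndependent ℝ ![α, β])
    (hαα : mform r α α < 0) (hββ : mform r β β < 0) :
    (¬ ∃ t : ℝ, mform r (t • β - α) (t • β - α) = 0) ↔
      (∃ δ : Fin (r + 1) → ℝ, 0 < mform r δ δ ∧ 0 < mform r δ (lclass r) ∧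
        mform r δ α = 0 ∧ mform r δ β = 0) := by
  constructor
  · intro hno
    have hgram : mform r α β ^ 2 < mform r α α * mform r β β :=
      (mformBilin r).sq_apply_lt_mul_of_forall_ne_zero mformBilin_isSymm hββ.ne
        fun t ht => hno ⟨t, ht⟩
    obtain ⟨δ, hδδ, hδL, hδα, hδβ⟩ := (mformBilin r).exists_orthogonal_apply_self_ge
      mformBilin_isSymm hαα hgram (lclass r)
    simp only [mformBilin_apply, mform_lclass_self] at hδδ hδL
    exact ⟨δ, by linarith, by linarith, hδα, hδβ⟩
  · rintro ⟨δ, hδ, -, hδα, hδβ⟩ ⟨t, ht⟩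
    have hne : t • β - α ≠ 0 := sub_ne_zero.mpr ((linearIndependent_fin2.mp hind).2 t)
    have horth : mform r δ (t • β - α) = 0 := by
      rw [← mformBilin_apply, map_sub, map_smul]
      simp [mformBilin_apply, hδα, hδβ]
    exact (mform_self_neg_of_orthogonal hδ horth hne).ne ht

theorem stmt3 (r : ℕ) (hr : 1 ≤ r) (α β : Fin (r + 1) → ℝ)
    (hind : LinearIndependent ℝ ![α, β])
    (hαα : mform r α α < 0) (hββ : mform r β β < 0) :
    (¬ ∃ t : ℝ, mform r (t • β - α) (t • β - α) = 0) ↔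
      (∃ δ : Fin (r + 1) → ℝ, 0 < mform r δ δ ∧ 0 < mform r δ (lclass r) ∧
        mform r δ α = 0 ∧ mform r δ β = 0) :=
  stmt3_general r α β hind hαα hββ
end
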